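/- The function F(T) = 2T²(2T+1)²√(T+1)/(3T+1)^{3/2} satisfies: F(T) > 0 for all T ∈ (-1/3, ∞) with T ≠ 0, F(0) = 0, F is strictly decreasing on (-1/3, 0], and F is strictly increasing on [0, ∞). -/

import Mathlib

/-!
On `(-1/3, ∞)` the function `F` is nonnegative and `F² = 4T⁴(2T+1)⁴(T+1)/(3T+1)³` is rational,
with derivative `8T³(2T+1)³(18T³+27T²+12T+2)/(3T+1)⁴`. Every factor except `T³` is positive
there, so `F²`, and with it `F`, decreases up to `0` and increases from `0` on.
-/

noncomputable def Ffun (T : ℝ) : ℝ :=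
  2 * T ^ 2 * (2 * T + 1) ^ 2 * Real.sqrt (T + 1) / (3 * T + 1) ^ ((3 : ℝ) / 2)

open Set

section SquareMonotone

variable {α M : Type*} [Preorder α] [MonoidWithZero M] [LinearOrder M]
  [PosMulStrictMono M] [MulPosMono M] {f : α → M} {s : Set α}

theorem StrictMonoOn.of_sq (hf : ∀ x ∈ s, 0 ≤ f x) (h : StrictMonoOn (fun x ↦ f x ^ 2) s) :
    StrictMonoOn f s :=
  fun _ hx _ hy hxy ↦ lt_of_pow_lt_pow_left₀ 2 (hf _ hy) (h hx hy hxy)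

theorem StrictAntiOn.of_sq (hf : ∀ x ∈ s, 0 ≤ f x) (h : StrictAntiOn (fun x ↦ f x ^ 2) s) :
    StrictAntiOn f s :=
  fun _ hx _ hy hxy ↦ lt_of_pow_lt_pow_left₀ 2 (hf _ hx) (h hx hy hxy)

end SquareMonotone

noncomputable def FfunSq (T : ℝ) : ℝ :=
  4 * T ^ 4 * (2 * T + 1) ^ 4 * (T + 1) / (3 * T + 1) ^ 3

section

variable {T : ℝ}

theorem Ffun_nonneg (hT : -(1 : ℝ) / 3 < T) : 0 ≤ Ffun T :=
  div_nonneg (by positivity) (Real.rpow_nonneg (by linarith) _)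

theorem Ffun_pos (hT : -(1 : ℝ) / 3 < T) (h0 : T ≠ 0) : 0 < Ffun T := by
  have h2 : 0 < 2 * T + 1 := by linarith
  have h3 : 0 < T + 1 := by linarith
  exact div_pos (by positivity) (Real.rpow_pos_of_pos (by linarith) _)

theorem Ffun_sq (hT : -(1 : ℝ) / 3 < T) : Ffun T ^ 2 = FfunSq T := by
  have hden : ((3 * T + 1) ^ ((3 : ℝ) / 2)) ^ 2 = (3 * T + 1) ^ 3 := by
    rw [← Real.rpow_natCast, ← Real.rpow_mul (by linarith)]
    norm_num
  rw [Ffun, FfunSq, div_pow, hden, mul_pow, Real.sq_sqrt (by linarith)]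
  ring

theorem hasDerivAt_FfunSq (hT : -(1 : ℝ) / 3 < T) :
    HasDerivAt FfunSq
      (T ^ 3 * (8 * (2 * T + 1) ^ 3 * (18 * T ^ 3 + 27 * T ^ 2 + 12 * T + 2) / (3 * T + 1) ^ 4))
      T := by
  have h2 := ((hasDerivAt_id T).const_mul 2).add_const 1
  have h3 := ((hasDerivAt_id T).const_mul 3).add_const 1
  have hd : HasDerivAt FfunSq _ T :=
    ((((hasDerivAt_pow 4 T).const_mul 4).mul (h2.pow 4)).mul ((hasDerivAt_id T).add_const 1)).div
      (h3.pow 3) (pow_ne_zero 3 (by linarith))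
  refine hd.congr_deriv ?_
  simp only [Nat.cast_ofNat, Nat.add_one_sub_one, id_eq, Pi.pow_apply, mul_one, Pi.mul_apply]
  field_simp
  ring

theorem FfunSq_deriv_cofactor_pos (hT : -(1 : ℝ) / 3 < T) :
    0 < 8 * (2 * T + 1) ^ 3 * (18 * T ^ 3 + 27 * T ^ 2 + 12 * T + 2) / (3 * T + 1) ^ 4 := by
  have hu : 0 < 3 * T + 1 := by linarith
  have h2 : 0 < 2 * T + 1 := by linarith
  -- in `u = 3T + 1` the cubic is `(2u³ + 3u² + 1) / 3`
  have hc : 0 < 18 * T ^ 3 + 27 * T ^ 2 + 12 * T + 2 := by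
    rw [show 18 * T ^ 3 + 27 * T ^ 2 + 12 * T + 2
        = (2 * (3 * T + 1) ^ 3 + 3 * (3 * T + 1) ^ 2 + 1) / 3 by ring]
    positivity
  positivity

end

theorem continuousOn_FfunSq : ContinuousOn FfunSq (Ioi (-(1 : ℝ) / 3)) :=
  fun _ hT ↦ (hasDerivAt_FfunSq hT).continuousAt.continuousWithinAt

theorem FfunSq_strictAntiOn : StrictAntiOn FfunSq (Ioc (-(1 : ℝ) / 3) 0) := by
  refine strictAntiOn_of_hasDerivWithinAt_neg (convex_Ioc _ _)
    (continuousOn_FfunSq.mono Ioc_subset_Ioi_self)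
    (fun T hT ↦ (hasDerivAt_FfunSq (interior_subset hT).1).hasDerivWithinAt) fun T hT ↦ ?_
  rw [interior_Ioc] at hT
  exact mul_neg_of_neg_of_pos (Odd.pow_neg (by decide) hT.2) (FfunSq_deriv_cofactor_pos hT.1)

theorem FfunSq_strictMonoOn : StrictMonoOn FfunSq (Ici 0) := by
  have hsub : Ici (0 : ℝ) ⊆ Ioi (-(1 : ℝ) / 3) := Ici_subset_Ioi.2 (by norm_num)
  refine strictMonoOn_of_hasDerivWithinAt_pos (convex_Ici _) (continuousOn_FfunSq.mono hsub)
    (fun T hT ↦ (hasDerivAt_FfunSq (hsub (interior_subset hT))).hasDerivWithinAt) fun T hT ↦ ?_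
  rw [interior_Ici] at hT
  exact mul_pos (pow_pos hT 3) (FfunSq_deriv_cofactor_pos (hsub (Ioi_subset_Ici_self hT)))

/-- `F` is positive on `(-1/3,∞) \ {0}`, vanishes at `0`, is strictly decreasing on
`(-1/3, 0]` and strictly increasing on `[0, ∞)`. -/
theorem Ffun_monotonicity :
    (∀ T ∈ Set.Ioi (-(1 : ℝ) / 3), T ≠ 0 → 0 < Ffun T) ∧
    Ffun 0 = 0 ∧
    StrictAntiOn Ffun (Set.Ioc (-(1 : ℝ) / 3) 0) ∧
    StrictMonoOn Ffun (Set.Ici (0 : ℝ)) := by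
  refine ⟨fun T hT h0 ↦ Ffun_pos hT h0, by simp [Ffun], ?_, ?_⟩
  · refine StrictAntiOn.of_sq (fun T hT ↦ Ffun_nonneg hT.1) ?_
    exact FfunSq_strictAntiOn.congr fun T hT ↦ (Ffun_sq hT.1).symm
  · have hsub : Ici (0 : ℝ) ⊆ Ioi (-(1 : ℝ) / 3) := Ici_subset_Ioi.2 (by norm_num)
    refine StrictMonoOn.of_sq (fun T hT ↦ Ffun_nonneg (hsub hT)) ?_
    exact FfunSq_strictMonoOn.congr fun T hT ↦ (Ffun_sq (hsub hT)).symm
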